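/- Let S be an affine progression in I = [s, s+p) with difference q > 0, break point b, and let g be an S-jump function with parameters θ, t where θ ∤ q. If g attains its global minimum in I, then the set of minimizers of g in I is contained in one of the intervals [s, s+q), [b, b+q), or [s+p-q, s+p). -/

import Mathlib

/-! Write `r j = lpr (j * q) p`, so that `S ∖ {s} = {s + r j | 1 ≤ j ≤ l}`. For `v` and
`v + q` in `[1, p]` we have `r (j + 1) = v + q ↔ r j = v`, and `r` is injective on `[0, p)`
as `p` and `q` are coprime; hence inside `I` the shift by `q` maps `S` onto itself except at
the break point `b = s + r l`. Consequently the forward difference `D x = g (x + q) - g x` on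
the window `s ≤ x < s + p - q` is `σ + θ [b ≤ x]`, and it never vanishes because
`D x ≡ q t ≢ 0 (mod θ)`. A minimizer `x` with `x + q ∈ I` forces `D x > 0`, and one with
`x - q ∈ I` forces `D (x - q) < 0`; if both kinds occur then `σ < 0 < σ + θ`, and this pins
every minimizer into `[b, b + q)`. -/

/-- Least positive residue of `a` modulo `w` (taking values in `1, …, w` for `w > 0`). -/
def lpr (a w : ℤ) : ℤ := (a - 1) % w + 1

/-- `S` is an affine progression in `[s, s+w)` of difference `d` and length `l`. -/
def IsAffProg (S : Set ℤ) (s w d l : ℤ) : Prop :=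
  S ⊆ Set.Ico s (s + w) ∧
    S \ {s} = {x : ℤ | ∃ j : ℤ, 1 ≤ j ∧ j ≤ l ∧ x = s + lpr (j * d) w}

open Set

lemma lpr_modEq (a w : ℤ) : lpr a w ≡ a [ZMOD w] := by
  simpa [lpr] using (Int.mod_modEq (a - 1) w).add_right 1

lemma lpr_eq_iff {a w x : ℤ} (hx : 1 ≤ x) (hxw : x ≤ w) : lpr a w = x ↔ x ≡ a [ZMOD w] := by
  refine ⟨fun h => h ▸ lpr_modEq a w, fun h => ?_⟩
  have h' : (x - 1) % w = (a - 1) % w := h.sub_right 1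
  rw [Int.emod_eq_of_lt (by omega) (by omega)] at h'
  simp only [lpr]
  omega

lemma one_le_lpr (a : ℤ) {w : ℤ} (hw : 0 < w) : 1 ≤ lpr a w := by
  have := Int.emod_nonneg (a - 1) hw.ne'
  simp only [lpr]
  omega

lemma lpr_zero {w : ℤ} (hw : 0 < w) : lpr 0 w = w :=
  (lpr_eq_iff hw le_rfl).2 (Int.emod_self.trans (Int.zero_emod w).symm)

lemma lpr_add_eq_add_iff {a e v w : ℤ} (he : 0 ≤ e) (hv : 1 ≤ v) (hvw : v + e ≤ w) :
    lpr (a + e) w = v + e ↔ lpr a w = v := by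
  rw [lpr_eq_iff (by omega) hvw, lpr_eq_iff hv (by omega)]
  exact ⟨Int.ModEq.add_right_cancel' e, Int.ModEq.add_right e⟩

lemma eq_of_lpr_mul_eq {d i j w : ℤ} (hcop : IsCoprime w d) (hi : 0 ≤ i) (hiw : i < w)
    (hj : 0 ≤ j) (hjw : j < w) (h : lpr (i * d) w = lpr (j * d) w) : i = j := by
  have hmod : i * d ≡ j * d [ZMOD w] := (lpr_modEq _ _).symm.trans (h ▸ lpr_modEq _ _)
  have hdvd : w ∣ (j - i) * d := by
    rw [sub_mul]; exact Int.modEq_iff_dvd.1 hmod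
  have := Int.eq_zero_of_abs_lt_dvd (hcop.dvd_of_dvd_mul_right hdvd)
    (abs_lt.2 ⟨by omega, by omega⟩)
  omega

def breakPoint (s w d l : ℤ) : ℤ := if l = 0 then s else s + lpr (l * d) w

lemma le_breakPoint {s w d l : ℤ} (hw : 0 < w) : s ≤ breakPoint s w d l := by
  have := one_le_lpr (l * d) hw
  unfold breakPoint
  split_ifs <;> omega

namespace IsAffProg

variable {S : Set ℤ} {s w d l : ℤ}

lemma mem_iff (hS : IsAffProg S s w d l) {y : ℤ} (hy : y ≠ s) :
    y ∈ S ↔ ∃ j, 1 ≤ j ∧ j ≤ l ∧ y = s + lpr (j * d) w := by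
  have := Set.ext_iff.1 hS.2 y
  simpa only [mem_sdiff, mem_singleton_iff, hy, not_false_eq_true, and_true, mem_ofPred_eq]
    using this

lemma breakPoint_mem (hS : IsAffProg S s w d l) (hl0 : 0 ≤ l) (hl : l < w) (hl1 : l ≠ 0) :
    breakPoint s w d l ∈ S := by
  have := one_le_lpr (l * d) (by omega : 0 < w)
  rw [breakPoint, if_neg hl1, hS.mem_iff (by omega)]
  exact ⟨l, by omega, le_rfl, rfl⟩

lemma add_mem_iff (hS : IsAffProg S s w d l) (hcop : IsCoprime w d) (hl0 : 0 ≤ l) (hl : l < w)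
    (hd : 0 ≤ d) {x : ℤ} (hx : s < x) (hxd : x + d < s + w) :
    x + d ∈ S ↔ x ∈ S ∧ x ≠ breakPoint s w d l := by
  have hw : 0 < w := by omega
  rw [hS.mem_iff (by omega : x + d ≠ s), hS.mem_iff hx.ne']
  rcases eq_or_ne l 0 with rfl | hl1
  · constructor
    · rintro ⟨j, hj1, hj0, -⟩; omega
    · rintro ⟨⟨j, hj1, hj0, -⟩, -⟩; omega
  have hshift : ∀ j, lpr (j * d) w = x - s + d ↔ lpr ((j - 1) * d) w = x - s := fun j => by
    simpa only [sub_one_mul, sub_add_cancel] using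
      lpr_add_eq_add_iff (a := (j - 1) * d) hd (by omega) (by omega : x - s + d ≤ w)
  rw [breakPoint, if_neg hl1]
  constructor
  · rintro ⟨j, hj1, hjl, hj⟩
    have hprev := (hshift j).1 (by omega)
    have hj2 : j ≠ 1 := by
      rintro rfl
      rw [sub_self, zero_mul, lpr_zero hw] at hprev
      omega
    refine ⟨⟨j - 1, by omega, by omega, by omega⟩, fun hb => ?_⟩
    have := eq_of_lpr_mul_eq hcop (by omega) (by omega) hl0 hl (by omega : lpr ((j - 1) * d) w = _)
    omega
  · rintro ⟨⟨j, hj1, hjl, rfl⟩, hb⟩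
    have hjl' : j ≠ l := by rintro rfl; exact hb rfl
    refine ⟨j + 1, by omega, by omega, ?_⟩
    have := (hshift (j + 1)).2 (by rw [add_sub_cancel_right]; omega)
    omega

end IsAffProg

section JumpFunction

variable {g : ℤ → ℤ} {t θ : ℤ}

lemma sub_modEq_mul_of_jump (hjump : ∀ x, g x - g (x - 1) = t ∨ g x - g (x - 1) = t - θ)
    (x : ℤ) {n : ℤ} (hn : 0 ≤ n) : g (x + n) - g x ≡ n * t [ZMOD θ] := by
  induction n, hn using Int.leInduction with
  | base => simp
  | succ n _ ih =>
    have hstep : g (x + (n + 1)) - g (x + n) ≡ t [ZMOD θ] := by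
      rw [← add_assoc]
      rcases hjump (x + n + 1) with h | h <;> rw [add_sub_cancel_right] at h <;> rw [h]
      exact Int.modEq_iff_dvd.2 ⟨1, by ring⟩
    simpa [add_mul, sub_add_sub_cancel'] using ih.add hstep

lemma forward_diff_ne_zero (hjump : ∀ x, g x - g (x - 1) = t ∨ g x - g (x - 1) = t - θ)
    (hcop : IsCoprime t θ) {q : ℤ} (hq : 0 ≤ q) (hndvd : ¬ θ ∣ q) (x : ℤ) :
    g (x + q) - g x ≠ 0 := fun h =>
  hndvd <| hcop.symm.dvd_of_dvd_mul_right <|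
    Int.modEq_zero_iff_dvd.1 (h ▸ sub_modEq_mul_of_jump hjump x hq).symm

end JumpFunction

lemma eq_add_ite_of_sub_pred_eq_ite {D : ℤ → ℤ} {s e b θ : ℤ}
    (hstep : ∀ x, s < x → x < e → D x - D (x - 1) = θ * if x = b then 1 else 0)
    {x : ℤ} (hx : s ≤ x) (hxe : x < e) :
    D x = (D s - θ * if b ≤ s then 1 else 0) + θ * if b ≤ x then 1 else 0 := by
  induction x, hx using Int.leInduction with
  | base => ring
  | succ n hn ih =>
    have h := hstep (n + 1) (by omega) hxe
    rw [add_sub_cancel_right, ih (by omega)] at h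
    split_ifs at h ⊢ <;> omega

lemma forward_diff_sub_pred {S : Set ℤ} {g : ℤ → ℤ} {s p q l t θ : ℤ}
    (hS : IsAffProg S s p q l) (hcop : IsCoprime p q) (hl0 : 0 ≤ l) (hl : l < p) (hq : 0 ≤ q)
    (hjumpS : ∀ x : ℤ, s ≤ x → x < s + p →
      (x ∈ S → g x - g (x - 1) = t - θ) ∧ (x ∉ S → g x - g (x - 1) = t))
    {x : ℤ} (hx : s < x) (hxq : x + q < s + p) :
    (g (x + q) - g x) - (g (x - 1 + q) - g (x - 1)) =
      θ * if x = breakPoint s p q l then 1 else 0 := by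
  have hshift := hS.add_mem_iff hcop hl0 hl hq hx hxq
  have hfwd := hjumpS (x + q) (by omega) hxq
  have hcur := hjumpS x hx.le (by omega)
  rw [show x + q - 1 = x - 1 + q by ring] at hfwd
  by_cases hb : x = breakPoint s p q l
  · have hxS : x ∈ S := by
      refine hb ▸ hS.breakPoint_mem hl0 hl fun hl1 => ?_
      rw [breakPoint, if_pos hl1] at hb
      omega
    have hxqS : x + q ∉ S := fun h => (hshift.1 h).2 hb
    rw [if_pos hb]
    linarith [hfwd.2 hxqS, hcur.1 hxS]
  · rw [if_neg hb]
    by_cases hxS : x ∈ S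
    · linarith [hfwd.1 (hshift.2 ⟨hxS, hb⟩), hcur.1 hxS]
    · linarith [hfwd.2 fun h => hxS (hshift.1 h).1, hcur.2 hxS]

lemma subset_Ico_of_forward_diff_eq {g : ℤ → ℤ} {M : Set ℤ} {s p q b σ θ : ℤ}
    (hθ : 0 < θ) (hbs : s ≤ b)
    (hD : ∀ x, s ≤ x → x + q < s + p → g (x + q) - g x = σ + θ * if b ≤ x then 1 else 0)
    (hne : ∀ x, s ≤ x → x + q < s + p → g (x + q) - g x ≠ 0)
    (hM : M ⊆ Ico s (s + p)) (hmin : ∀ z ∈ M, ∀ y, g z ≤ g y) :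
    M ⊆ Ico s (s + q) ∨ M ⊆ Ico b (b + q) ∨ M ⊆ Ico (s + p - q) (s + p) := by
  by_cases hright : M ⊆ Ico (s + p - q) (s + p)
  · exact Or.inr (Or.inr hright)
  by_cases hleft : M ⊆ Ico s (s + q)
  · exact Or.inl hleft
  have hpos : ∀ z ∈ M, z + q < s + p → 0 < σ + θ * if b ≤ z then 1 else 0 := fun z hz hzq => by
    rw [← hD z (hM hz).1 hzq]
    exact lt_of_le_of_ne (sub_nonneg.2 (hmin z hz _)) (hne z (hM hz).1 hzq).symm
  have hneg : ∀ z ∈ M, s + q ≤ z → (σ + θ * if b ≤ z - q then 1 else 0) < 0 := fun z hz hzq => by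
    have hzp := (hM hz).2
    rw [← hD (z - q) (by omega) (by omega), sub_add_cancel]
    refine lt_of_le_of_ne (sub_nonpos.2 (hmin z hz _)) ?_
    simpa using hne (z - q) (by omega) (by omega)
  obtain ⟨x, hxM, hx⟩ := not_subset.1 hright
  obtain ⟨y, hyM, hy⟩ := not_subset.1 hleft
  have hxI := hM hxM
  have hyI := hM hyM
  simp only [mem_Ico, not_and, not_lt] at hx hy hxI hyI
  have hσ : σ < 0 := by
    have := hneg y hyM (by omega)
    split_ifs at this <;> omega
  have hbx : b ≤ x := by
    have := hpos x hxM (by omega)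
    split_ifs at this with h <;> omega
  refine Or.inr (Or.inl fun z hz => ?_)
  have hzI := hM hz
  simp only [mem_Ico] at hzI ⊢
  constructor
  · by_contra! hzb
    have := hpos z hz (by omega)
    rw [if_neg (by omega)] at this
    omega
  · by_contra! hzb
    have hz' := hneg z hz (by omega)
    have hx' := hpos x hxM (by omega)
    rw [if_pos (by omega)] at hz'
    rw [if_pos hbx] at hx'
    omega

theorem stmt15_general (s p q l b t θ : ℤ) (S : Set ℤ) (g : ℤ → ℤ)
    (hq : 0 < q) (hcop : IsCoprime p q)
    (hl0 : 0 ≤ l) (hl : l < p)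
    (ht : 0 < t) (htθ : t < θ) (hcopt : IsCoprime t θ) (hndvd : ¬ θ ∣ q)
    (hS : IsAffProg S s p q l)
    (hb : b = if l = 0 then s else s + lpr (l * q) p)
    (hjump : ∀ x : ℤ, g x - g (x - 1) = t ∨ g x - g (x - 1) = t - θ)
    (hjumpS : ∀ x : ℤ, s ≤ x → x < s + p →
      (x ∈ S → g x - g (x - 1) = t - θ) ∧ (x ∉ S → g x - g (x - 1) = t)) :
    {x : ℤ | x ∈ Set.Ico s (s + p) ∧ ∀ y : ℤ, g x ≤ g y} ⊆ Set.Ico s (s + q) ∨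
    {x : ℤ | x ∈ Set.Ico s (s + p) ∧ ∀ y : ℤ, g x ≤ g y} ⊆ Set.Ico b (b + q) ∨
    {x : ℤ | x ∈ Set.Ico s (s + p) ∧ ∀ y : ℤ, g x ≤ g y} ⊆
      Set.Ico (s + p - q) (s + p) := by
  have hbreak : b = breakPoint s p q l := hb
  subst hbreak
  have hstep : ∀ x, s < x → x < s + p - q →
      (g (x + q) - g x) - (g (x - 1 + q) - g (x - 1)) =
        θ * if x = breakPoint s p q l then 1 else 0 :=
    fun x hx _ => forward_diff_sub_pred hS hcop hl0 hl hq.le hjumpS hx (by omega)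
  have hdiff := fun x (hx : s ≤ x) (hxq : x + q < s + p) =>
    eq_add_ite_of_sub_pred_eq_ite (D := fun x => g (x + q) - g x) hstep hx (by omega)
  exact subset_Ico_of_forward_diff_eq (ht.trans htθ) (le_breakPoint (by omega)) hdiff
    (fun x _ _ => forward_diff_ne_zero hjump hcopt hq.le hndvd x) (fun _ hz => hz.1)
    (fun _ hz => hz.2)

/-- For an affine progression `S` in `I = [s, s+p)` of positive difference `q`
and break point `b`, and an `S`-jump function `g` with parameters `θ ∤ q`
attaining its global minimum in `I`, the minimizers of `g` in `I` are
contained in one of `[s, s+q)`, `[b, b+q)`, `[s+p-q, s+p)`. -/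
theorem stmt15 (s p q l b t θ : ℤ) (S : Set ℤ) (g : ℤ → ℤ)
    (hq : 0 < q) (hqp : q < p) (hcop : IsCoprime p q)
    (hl0 : 0 ≤ l) (hl : l < p)
    (ht : 0 < t) (htθ : t < θ) (hcopt : IsCoprime t θ) (hndvd : ¬ θ ∣ q)
    (hS : IsAffProg S s p q l)
    (hb : b = if l = 0 then s else s + lpr (l * q) p)
    (hjump : ∀ x : ℤ, g x - g (x - 1) = t ∨ g x - g (x - 1) = t - θ)
    (hjumpS : ∀ x : ℤ, s ≤ x → x < s + p →
      (x ∈ S → g x - g (x - 1) = t - θ) ∧ (x ∉ S → g x - g (x - 1) = t))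
    (hmin : ∃ x ∈ Set.Ico s (s + p), ∀ y : ℤ, g x ≤ g y) :
    {x : ℤ | x ∈ Set.Ico s (s + p) ∧ ∀ y : ℤ, g x ≤ g y} ⊆ Set.Ico s (s + q) ∨
    {x : ℤ | x ∈ Set.Ico s (s + p) ∧ ∀ y : ℤ, g x ≤ g y} ⊆ Set.Ico b (b + q) ∨
    {x : ℤ | x ∈ Set.Ico s (s + p) ∧ ∀ y : ℤ, g x ≤ g y} ⊆
      Set.Ico (s + p - q) (s + p) :=
  stmt15_general s p q l b t θ S g hq hcop hl0 hl ht htθ hcopt hndvd hS hb hjump hjumpS
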